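/- Let b ≥ 2 be an integer and ε ∈ (0,1) with b(1−2ε)² > 1. Then the reconstruction problem for the b-ary tree T_b and the binary symmetric channel with error probability ε is solvable, and moreover it is census solvable. -/

import Mathlib

/-!
Kesten–Stigum via the magnetization `S_n = ∑_{v ∈ L_n} σ_v`, with `θ = 1 - 2ε`. Given the root
spin `s`, `E[S_n] = s (bθ)ⁿ`, and since the children of a vertex are independent given it,
`E[S_{n+1}²] = b²θ² E[S_n²] + (1 - θ²) bⁿ⁺¹`; hence `E[S_n²] = O((b²θ²)ⁿ)` when `bθ² > 1`.
Cauchy–Schwarz against `|P⁺ - P⁻|` then bounds the total variation distance between the two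
census laws below by `(bθ² - 1) / (bθ² - θ²)` for every `n`, and `S_n` is a function of the census,
which in turn is a function of the configuration.

Both distances are nonincreasing in `n`: level `n + 1` is obtained from level `n` through a Markov
kernel, and so is its census, because permuting level `n` lifts to a permutation of level `n + 1`,
so the census of level `n + 1` depends on level `n` only through its census. A nonincreasing
sequence bounded below by a positive constant converges to a positive limit.
-/

open Filter

/-- The distribution of the configuration at level `n` of the `b`-ary tree,
for the broadcast process with channel `M`, given that the root has value `i`.
Vertices at level `n` are encoded as paths `Fin n → Fin b`. -/
noncomputable def levelDist {A : Type} [Fintype A] [DecidableEq A]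
    (M : A → A → ℝ) (b : ℕ) (i : A) : (n : ℕ) → ((Fin n → Fin b) → A) → ℝ
  | 0 => fun σ => if σ = (fun _ => i) then 1 else 0
  | n + 1 => fun τ => ∑ σ : (Fin n → Fin b) → A, levelDist M b i n σ *
      ∏ w : Fin (n + 1) → Fin b, M (σ fun m => w m.castSucc) (τ w)

/-- Total variation distance between two (densities of) probability measures
on a finite set. -/
noncomputable def tvDist {Ω : Type*} [Fintype Ω] (P Q : Ω → ℝ) : ℝ :=
  (1 / 2) * ∑ σ, |P σ - Q σ|

/-- The census of a configuration: the number of vertices carrying each symbol. -/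
def census {A : Type} [Fintype A] [DecidableEq A] {b n : ℕ}
    (σ : (Fin n → Fin b) → A) : A → ℕ :=
  fun j => (Finset.univ.filter fun p => σ p = j).card

/-- The distribution of the census of level `n`, given that the root has value `i`. -/
noncomputable def censusDist {A : Type} [Fintype A] [DecidableEq A]
    (M : A → A → ℝ) (b : ℕ) (i : A) (n : ℕ) (c : A → ℕ) : ℝ :=
  ∑ σ : (Fin n → Fin b) → A, if census σ = c then levelDist M b i n σ else 0

/-- Total variation distance between the census distributions at level `n`
given root values `i` and `j`. -/
noncomputable def censusTV {A : Type} [Fintype A] [DecidableEq A]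
    (M : A → A → ℝ) (b : ℕ) (i j : A) (n : ℕ) : ℝ :=
  (1 / 2) * ∑' c : A → ℕ, |censusDist M b i n c - censusDist M b j n c|

/-- The binary symmetric channel with error probability `ε`, on the alphabet
`Bool` (where `true` represents `+1` and `false` represents `-1`). -/
noncomputable def bsc (ε : ℝ) : Bool → Bool → ℝ :=
  fun i j => if i = j then 1 - ε else ε

open Finset

section FiniteDistributions
variable {α β γ : Type*}

theorem sum_abs_sum_mul_le (s : Finset α) (t : Finset β) (d : α → ℝ) {K : α → β → ℝ}
    (hK0 : ∀ σ ∈ s, ∀ τ ∈ t, 0 ≤ K σ τ) (hK1 : ∀ σ ∈ s, ∑ τ ∈ t, K σ τ ≤ 1) :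
    ∑ τ ∈ t, |∑ σ ∈ s, d σ * K σ τ| ≤ ∑ σ ∈ s, |d σ| :=
  calc ∑ τ ∈ t, |∑ σ ∈ s, d σ * K σ τ|
      ≤ ∑ τ ∈ t, ∑ σ ∈ s, |d σ| * K σ τ := sum_le_sum fun τ hτ =>
        (abs_sum_le_sum_abs _ _).trans_eq <| sum_congr rfl fun σ hσ => by
          rw [abs_mul, abs_of_nonneg (hK0 σ hσ τ hτ)]
    _ = ∑ σ ∈ s, |d σ| * ∑ τ ∈ t, K σ τ := by rw [sum_comm]; simp_rw [mul_sum]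
    _ ≤ ∑ σ ∈ s, |d σ| :=
        sum_le_sum fun σ hσ => mul_le_of_le_one_right (abs_nonneg _) (hK1 σ hσ)

/-- Cauchy–Schwarz with the weights `|p - q| ≤ p + q`. -/
theorem sq_sum_mul_sub_le (s : Finset α) (X : α → ℝ) {p q : α → ℝ}
    (hp : ∀ σ ∈ s, 0 ≤ p σ) (hq : ∀ σ ∈ s, 0 ≤ q σ) :
    (∑ σ ∈ s, X σ * (p σ - q σ)) ^ 2
      ≤ (∑ σ ∈ s, |p σ - q σ|) * ∑ σ ∈ s, X σ ^ 2 * (p σ + q σ) := by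
  have habs : (∑ σ ∈ s, X σ * (p σ - q σ)) ^ 2 ≤ (∑ σ ∈ s, |X σ| * |p σ - q σ|) ^ 2 := by
    refine sq_le_sq.2 ((abs_sum_le_sum_abs _ _).trans ?_)
    simp_rw [abs_mul]
    exact le_abs_self _
  refine habs.trans (sum_sq_le_sum_mul_sum_of_sq_le_mul s (fun σ _ => abs_nonneg _)
    (fun σ hσ => mul_nonneg (sq_nonneg _) (add_nonneg (hp σ hσ) (hq σ hσ))) fun σ hσ => ?_)
  have hpq : |p σ - q σ| ≤ p σ + q σ := by
    rw [abs_le]; constructor <;> linarith [hp σ hσ, hq σ hσ]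
  calc (|X σ| * |p σ - q σ|) ^ 2 = |p σ - q σ| * (X σ ^ 2 * |p σ - q σ|) := by
        rw [mul_pow, sq_abs]; ring
    _ ≤ |p σ - q σ| * (X σ ^ 2 * (p σ + q σ)) := by gcongr

theorem div_le_half_sum_abs_sub (s : Finset α) (X : α → ℝ) {p q : α → ℝ}
    (hp : ∀ σ ∈ s, 0 ≤ p σ) (hq : ∀ σ ∈ s, 0 ≤ q σ) {m a c : ℝ} (hm : m ≠ 0) (hc : 0 < c)
    (hmean : ∑ σ ∈ s, X σ * (p σ - q σ) = 2 * m)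
    (hsecond : a * ∑ σ ∈ s, X σ ^ 2 * (p σ + q σ) ≤ 2 * c * m ^ 2) :
    a / c ≤ 1 / 2 * ∑ σ ∈ s, |p σ - q σ| := by
  have hT : 0 ≤ ∑ σ ∈ s, |p σ - q σ| := sum_nonneg fun _ _ => abs_nonneg _
  rw [div_le_iff₀ hc]
  rcases le_or_gt a 0 with ha | ha
  · exact ha.trans (by positivity)
  refine le_of_mul_le_mul_right ?_ (by positivity : 0 < 4 * m ^ 2)
  calc a * (4 * m ^ 2) = a * (∑ σ ∈ s, X σ * (p σ - q σ)) ^ 2 := by rw [hmean]; ring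
    _ ≤ a * ((∑ σ ∈ s, |p σ - q σ|) * ∑ σ ∈ s, X σ ^ 2 * (p σ + q σ)) :=
        mul_le_mul_of_nonneg_left (sq_sum_mul_sub_le s X hp hq) ha.le
    _ = (∑ σ ∈ s, |p σ - q σ|) * (a * ∑ σ ∈ s, X σ ^ 2 * (p σ + q σ)) := by ring
    _ ≤ (∑ σ ∈ s, |p σ - q σ|) * (2 * c * m ^ 2) := mul_le_mul_of_nonneg_left hsecond hT
    _ = 1 / 2 * (∑ σ ∈ s, |p σ - q σ|) * c * (4 * m ^ 2) := by ring

theorem exists_pos_tendsto_of_antitone {u : ℕ → ℝ} (hu : Antitone u) {a : ℝ} (ha : 0 < a)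
    (hle : ∀ n, a ≤ u n) : ∃ L > 0, Tendsto u atTop (nhds L) :=
  ⟨⨅ n, u n, ha.trans_le (le_ciInf hle), tendsto_atTop_ciInf hu ⟨a, Set.forall_mem_range.2 hle⟩⟩

variable [Fintype α] [DecidableEq γ]

theorem sum_image_mul_sum_ite (f : α → γ) (p : α → ℝ) (φ : γ → ℝ) :
    ∑ c ∈ univ.image f, φ c * ∑ σ, (if f σ = c then p σ else 0) = ∑ σ, p σ * φ (f σ) := by
  simp_rw [mul_sum]
  rw [sum_comm]
  refine sum_congr rfl fun σ _ => ?_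
  simp_rw [mul_ite, mul_zero]
  rw [sum_ite_eq, if_pos (mem_image_of_mem f (mem_univ σ)), mul_comm]

theorem sum_mul_eq_sum_image_mul_invFun [Nonempty α] (f : α → γ) (p G : α → ℝ)
    (hG : ∀ σ σ', f σ = f σ' → G σ = G σ') :
    ∑ σ, p σ * G σ
      = ∑ c ∈ univ.image f, (∑ σ, if f σ = c then p σ else 0) * G (Function.invFun f c) := by
  simp_rw [mul_comm _ (G (Function.invFun f _)), sum_image_mul_sum_ite]
  exact sum_congr rfl fun σ _ => by rw [hG _ _ (Function.invFun_eq ⟨σ, rfl⟩).symm]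

theorem sum_image_abs_sub_le (f : α → γ) (p q : α → ℝ) :
    ∑ c ∈ univ.image f, |(∑ σ, if f σ = c then p σ else 0) - ∑ σ, if f σ = c then q σ else 0|
      ≤ ∑ σ, |p σ - q σ| := by
  have hK1 : ∀ σ ∈ (univ : Finset α),
      ∑ c ∈ univ.image f, (if f σ = c then (1 : ℝ) else 0) ≤ 1 := fun σ _ => by
    rw [sum_ite_eq, if_pos (mem_image_of_mem f (mem_univ σ))]
  refine le_of_eq_of_le (sum_congr rfl fun c _ => ?_)
    (sum_abs_sum_mul_le univ _ (fun σ => p σ - q σ) (fun _ _ _ _ => by positivity) hK1)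
  simp_rw [← sum_sub_distrib, mul_ite, mul_one, mul_zero, ite_sub_ite, sub_zero]

end FiniteDistributions

section ProductWeights
variable {ι α : Type*} [Fintype ι] [DecidableEq ι] [Fintype α] {K : ι → α → ℝ}

/-- Under the product weight `∏ w, K w (τ w)` with stochastic rows, the coordinates of `τ`
are independent. -/
theorem sum_prod_mul_prod_finset (hK : ∀ w, ∑ x, K w x = 1) (s : Finset ι)
    (g : ι → α → ℝ) :
    ∑ τ : ι → α, (∏ w, K w (τ w)) * ∏ w ∈ s, g w (τ w) = ∏ w ∈ s, ∑ x, K w x * g w x := by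
  have hrow : ∀ w, ∑ x, K w x * (if w ∈ s then g w x else 1)
      = if w ∈ s then ∑ x, K w x * g w x else 1 := fun w => by
    split_ifs <;> simp [hK]
  calc ∑ τ : ι → α, (∏ w, K w (τ w)) * ∏ w ∈ s, g w (τ w)
      = ∑ τ : ι → α, ∏ w, K w (τ w) * (if w ∈ s then g w (τ w) else 1) := by
        simp_rw [prod_mul_distrib, prod_ite_mem, univ_inter]
    _ = ∏ w ∈ s, ∑ x, K w x * g w x := by
        rw [← Fintype.prod_sum fun w x => K w x * if w ∈ s then g w x else 1]
        simp_rw [hrow, prod_ite_mem, univ_inter]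

theorem sum_prod_mul_sum (hK : ∀ w, ∑ x, K w x = 1) (f : α → ℝ) :
    ∑ τ : ι → α, (∏ w, K w (τ w)) * ∑ w, f (τ w) = ∑ w, ∑ x, K w x * f x := by
  simp_rw [mul_sum]
  rw [sum_comm]
  refine sum_congr rfl fun w _ => ?_
  simpa using sum_prod_mul_prod_finset hK {w} fun _ => f

/-- The variance of a sum of independent coordinates is the sum of their variances. -/
theorem sum_prod_mul_sum_sq (hK : ∀ w, ∑ x, K w x = 1) (f : α → ℝ) :
    ∑ τ : ι → α, (∏ w, K w (τ w)) * (∑ w, f (τ w)) ^ 2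
      = (∑ w, ∑ x, K w x * f x) ^ 2
        + ∑ w, (∑ x, K w x * f x ^ 2 - (∑ x, K w x * f x) ^ 2) := by
  set m : ι → ℝ := fun w => ∑ x, K w x * f x
  have hpair : ∀ w₁ w₂, ∑ τ : ι → α, (∏ w, K w (τ w)) * (f (τ w₁) * f (τ w₂))
      = m w₁ * m w₂ + if w₁ = w₂ then ∑ x, K w₁ x * f x ^ 2 - m w₁ ^ 2 else 0 := by
    intro w₁ w₂
    rcases eq_or_ne w₁ w₂ with rfl | hne
    · have h := sum_prod_mul_prod_finset hK {w₁} fun _ x => f x ^ 2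
      simp only [prod_singleton] at h
      rw [if_pos rfl]
      simp_rw [← sq, h]; ring
    · simpa [prod_pair hne, hne] using sum_prod_mul_prod_finset hK {w₁, w₂} fun _ => f
  calc ∑ τ : ι → α, (∏ w, K w (τ w)) * (∑ w, f (τ w)) ^ 2
      = ∑ w₁, ∑ w₂, ∑ τ : ι → α, (∏ w, K w (τ w)) * (f (τ w₁) * f (τ w₂)) := by
        simp_rw [sq, sum_mul_sum, mul_sum]
        rw [sum_comm]; exact sum_congr rfl fun _ _ => sum_comm
    _ = _ := by
        simp_rw [hpair, sum_add_distrib, sum_ite_eq, if_pos (mem_univ _), ← sum_mul_sum, sq]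
        rfl

end ProductWeights

theorem sum_comp_init {β : Type*} [Fintype β] {n : ℕ} (f : (Fin n → β) → ℝ) :
    ∑ w : Fin (n + 1) → β, f (Fin.init w) = Fintype.card β * ∑ v, f v := by
  have hinit (x : β) (v : Fin n → β) : Fin.init ((Fin.snocEquiv fun _ => β) (x, v)) = v :=
    funext fun i => by simp [Fin.init]
  rw [← (Fin.snocEquiv fun _ => β).sum_comp, Fintype.sum_prod_type]
  simp [hinit]

/-- `Fin.init w` is the parent of the vertex `w`. -/
noncomputable def levelKernel {A : Type} (M : A → A → ℝ) (b n : ℕ) (σ : (Fin n → Fin b) → A)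
    (τ : (Fin (n + 1) → Fin b) → A) : ℝ :=
  ∏ w, M (σ (Fin.init w)) (τ w)

theorem sum_levelKernel {A : Type} [Fintype A] {M : A → A → ℝ} {b n : ℕ}
    (hM : ∀ a, ∑ j, M a j = 1) (σ : (Fin n → Fin b) → A) : ∑ τ, levelKernel M b n σ τ = 1 := by
  unfold levelKernel
  rw [← Fintype.prod_sum fun (w : Fin (n + 1) → Fin b) (j : A) => M (σ (Fin.init w)) j]
  simp [hM]

section Broadcast
variable {A : Type} [Fintype A] [DecidableEq A] {M : A → A → ℝ} {b : ℕ}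

theorem levelDist_succ (M : A → A → ℝ) (b : ℕ) (i : A) (n : ℕ)
    (τ : (Fin (n + 1) → Fin b) → A) :
    levelDist M b i (n + 1) τ = ∑ σ, levelDist M b i n σ * levelKernel M b n σ τ :=
  rfl

theorem sum_levelDist_zero_mul (M : A → A → ℝ) (b : ℕ) (i : A)
    (F : ((Fin 0 → Fin b) → A) → ℝ) :
    ∑ σ, levelDist M b i 0 σ * F σ = F fun _ => i := by
  simp [levelDist]

theorem sum_levelDist_succ_mul (M : A → A → ℝ) (b : ℕ) (i : A) (n : ℕ)
    (F : ((Fin (n + 1) → Fin b) → A) → ℝ) :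
    ∑ τ, levelDist M b i (n + 1) τ * F τ
      = ∑ σ, levelDist M b i n σ * ∑ τ, levelKernel M b n σ τ * F τ := by
  simp_rw [levelDist_succ, sum_mul, mul_sum, mul_assoc]
  exact sum_comm

theorem levelKernel_nonneg (hM : M ∈ Matrix.rowStochastic ℝ A) {n : ℕ}
    (σ : (Fin n → Fin b) → A) (τ : (Fin (n + 1) → Fin b) → A) : 0 ≤ levelKernel M b n σ τ :=
  prod_nonneg fun _ _ => Matrix.nonneg_of_mem_rowStochastic hM

theorem levelDist_nonneg (hM : M ∈ Matrix.rowStochastic ℝ A) (i : A) (n : ℕ)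
    (σ : (Fin n → Fin b) → A) : 0 ≤ levelDist M b i n σ := by
  induction n with
  | zero => unfold levelDist; split <;> norm_num
  | succ n ih => exact sum_nonneg fun σ' _ => mul_nonneg (ih σ') (levelKernel_nonneg hM σ' σ)

theorem sum_levelDist (hM : ∀ a, ∑ j, M a j = 1) (i : A) (n : ℕ) :
    ∑ σ : (Fin n → Fin b) → A, levelDist M b i n σ = 1 := by
  induction n with
  | zero => simpa using sum_levelDist_zero_mul M b i fun _ => 1
  | succ n ih => simpa [sum_levelKernel hM, ih] using sum_levelDist_succ_mul M b i n fun _ => 1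

theorem tvDist_levelDist_antitone (hM : M ∈ Matrix.rowStochastic ℝ A) (i j : A) :
    Antitone fun n => tvDist (levelDist M b i n) (levelDist M b j n) := by
  refine antitone_nat_of_succ_le fun n => ?_
  unfold tvDist
  gcongr 1 / 2 * ?_
  simp_rw [levelDist_succ, ← sum_sub_distrib, ← sub_mul]
  exact sum_abs_sum_mul_le univ univ _ (fun σ _ τ _ => levelKernel_nonneg hM σ τ)
    fun σ _ => (sum_levelKernel (Matrix.sum_row_of_mem_rowStochastic hM) σ).le

end Broadcast

section BinarySymmetric
variable {b : ℕ}

def spin (x : Bool) : ℝ := if x then 1 else -1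

theorem spin_sq (x : Bool) : spin x ^ 2 = 1 := by cases x <;> norm_num [spin]

theorem bsc_mem_rowStochastic {ε : ℝ} (h0 : 0 ≤ ε) (h1 : ε ≤ 1) :
    bsc ε ∈ Matrix.rowStochastic ℝ Bool := by
  refine Matrix.mem_rowStochastic_iff_sum.2 ⟨fun i j => ?_, fun i => ?_⟩
  · unfold bsc; split <;> linarith
  · cases i <;> simp [bsc]

theorem sum_bsc (ε : ℝ) (i : Bool) : ∑ j, bsc ε i j = 1 := by
  cases i <;> simp [bsc]

theorem sum_bsc_mul_spin (ε : ℝ) (i : Bool) :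
    ∑ j, bsc ε i j * spin j = (1 - 2 * ε) * spin i := by
  cases i <;> simp [bsc, spin] <;> ring

theorem sum_bsc_mul_spin_sq (ε : ℝ) (i : Bool) : ∑ j, bsc ε i j * spin j ^ 2 = 1 := by
  simp only [spin_sq, mul_one, sum_bsc]

/-- `S_n = ∑_{v ∈ L_n} σ_v`, the symbols read as spins `±1`. -/
noncomputable def magnetization {n : ℕ} (σ : (Fin n → Fin b) → Bool) : ℝ := ∑ v, spin (σ v)

theorem magnetization_eq_census {n : ℕ} (σ : (Fin n → Fin b) → Bool) :
    magnetization σ = (census σ true : ℝ) - census σ false := by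
  simp only [magnetization, spin, sum_ite, sum_const, nsmul_eq_mul, mul_one, Bool.not_eq_true,
    census]
  ring

theorem sum_levelKernel_bsc_mul_magnetization (ε : ℝ) {n : ℕ} (σ : (Fin n → Fin b) → Bool) :
    ∑ τ, levelKernel (bsc ε) b n σ τ * magnetization τ
      = b * (1 - 2 * ε) * magnetization σ := by
  unfold levelKernel magnetization
  rw [sum_prod_mul_sum (fun w => sum_bsc ε _)]
  simp_rw [sum_bsc_mul_spin, ← mul_sum, sum_comp_init fun v => spin (σ v)]
  simp only [Fintype.card_fin]; ring

theorem sum_levelKernel_bsc_mul_magnetization_sq (ε : ℝ) {n : ℕ}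
    (σ : (Fin n → Fin b) → Bool) :
    ∑ τ, levelKernel (bsc ε) b n σ τ * magnetization τ ^ 2
      = (b * (1 - 2 * ε) * magnetization σ) ^ 2 + (1 - (1 - 2 * ε) ^ 2) * b ^ (n + 1) := by
  unfold levelKernel magnetization
  rw [sum_prod_mul_sum_sq (fun w => sum_bsc ε _)]
  simp_rw [sum_bsc_mul_spin, sum_bsc_mul_spin_sq, ← mul_sum, sum_comp_init fun v => spin (σ v),
    mul_pow, spin_sq]
  simp only [Fintype.card_fin, mul_one, sum_sub_distrib, sum_const, card_univ, Fintype.card_pi,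
    prod_const, nsmul_eq_mul, Nat.cast_pow]
  ring

theorem sum_levelDist_bsc_mul_magnetization (ε : ℝ) (i : Bool) (n : ℕ) :
    ∑ σ : (Fin n → Fin b) → Bool, levelDist (bsc ε) b i n σ * magnetization σ
      = spin i * (b * (1 - 2 * ε)) ^ n := by
  induction n with
  | zero => simp [sum_levelDist_zero_mul, magnetization]
  | succ n ih =>
    simp_rw [sum_levelDist_succ_mul, sum_levelKernel_bsc_mul_magnetization,
      mul_left_comm _ (_ * _ : ℝ), ← mul_sum, ih]
    ring

/-- Division-free form of `E[S_n²] = (1 + D) (b²θ²)ⁿ - D bⁿ`, `D = (1 - θ²) / (bθ² - 1)`. -/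
theorem sum_levelDist_bsc_mul_magnetization_sq (ε : ℝ) (i : Bool) (n : ℕ) :
    (b * (1 - 2 * ε) ^ 2 - 1)
        * ∑ σ : (Fin n → Fin b) → Bool, levelDist (bsc ε) b i n σ * magnetization σ ^ 2
      = (b * (1 - 2 * ε) ^ 2 - (1 - 2 * ε) ^ 2) * (b ^ 2 * (1 - 2 * ε) ^ 2) ^ n
        - (1 - (1 - 2 * ε) ^ 2) * b ^ n := by
  induction n with
  | zero => rw [sum_levelDist_zero_mul]; simp [magnetization, spin_sq]
  | succ n ih =>
    have hsum := sum_levelDist (b := b) (sum_bsc ε) i n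
    have hscale : ∑ σ, levelDist (bsc ε) b i n σ * (b * (1 - 2 * ε) * magnetization σ) ^ 2
        = (b * (1 - 2 * ε)) ^ 2 * ∑ σ, levelDist (bsc ε) b i n σ * magnetization σ ^ 2 := by
      rw [mul_sum]; exact sum_congr rfl fun σ _ => by ring
    simp_rw [sum_levelDist_succ_mul, sum_levelKernel_bsc_mul_magnetization_sq, mul_add,
      sum_add_distrib, ← sum_mul, hsum, hscale]
    linear_combination (b * (1 - 2 * ε)) ^ 2 * ih

end BinarySymmetric

section Census
variable {A : Type} [Fintype A] [DecidableEq A] {b : ℕ}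

theorem census_comp_perm {n : ℕ} (τ : (Fin n → Fin b) → A) (e : Equiv.Perm (Fin n → Fin b)) :
    census (τ ∘ e) = census τ :=
  funext fun _ => card_equiv e fun _ => by simp

theorem exists_perm_comp_eq_of_census_eq {n : ℕ} {σ σ' : (Fin n → Fin b) → Bool}
    (h : census σ = census σ') : ∃ e : Equiv.Perm (Fin n → Fin b), σ ∘ e = σ' := by
  obtain ⟨e, he⟩ := Equiv.Perm.exists_map_finset_eq {v | σ' v = true} {v | σ v = true}
    (congrFun h true).symm
  refine ⟨e, funext fun v => Bool.eq_iff_iff.2 ?_⟩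
  have hv : e v ∈ ({v | σ v = true} : Finset _) ↔ v ∈ ({v | σ' v = true} : Finset _) := by
    rw [← he, mem_map_equiv, Equiv.symm_apply_apply]
  simpa using hv

theorem exists_perm_init_eq {β : Type*} {n : ℕ} (e : Equiv.Perm (Fin n → β)) :
    ∃ E : Equiv.Perm (Fin (n + 1) → β), ∀ w, Fin.init (E w) = e (Fin.init w) :=
  ⟨(Fin.snocEquiv fun _ => β).permCongr ((Equiv.refl β).prodCongr e), fun w =>
    funext fun i => by simp [Fin.init]⟩

noncomputable def censusKernel (M : A → A → ℝ) (b n : ℕ) (σ : (Fin n → Fin b) → A)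
    (c : A → ℕ) : ℝ :=
  ∑ τ, if census τ = c then levelKernel M b n σ τ else 0

/-- Exchangeability of the children: relabelling level `n` relabels level `n + 1`, so the census
of level `n + 1` depends on level `n` only through its census. -/
theorem censusKernel_eq_of_census_eq (M : Bool → Bool → ℝ) {n : ℕ}
    {σ σ' : (Fin n → Fin b) → Bool} (h : census σ = census σ') (c : Bool → ℕ) :
    censusKernel M b n σ c = censusKernel M b n σ' c := by
  obtain ⟨e, rfl⟩ := exists_perm_comp_eq_of_census_eq h
  obtain ⟨E, hE⟩ := exists_perm_init_eq e
  have hker : ∀ τ, levelKernel M b n (σ ∘ e) (τ ∘ E) = levelKernel M b n σ τ := fun τ => by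
    simp only [levelKernel, Function.comp_apply, ← hE]
    exact Equiv.prod_comp E fun w => M (σ (Fin.init w)) (τ w)
  unfold censusKernel
  refine Fintype.sum_equiv (E.symm.arrowCongr (Equiv.refl Bool)) _ _ fun τ => ?_
  change _ = if census (τ ∘ E) = c then levelKernel M b n (σ ∘ e) (τ ∘ E) else 0
  rw [census_comp_perm, hker]

theorem censusKernel_nonneg {M : A → A → ℝ} (hM : M ∈ Matrix.rowStochastic ℝ A) {n : ℕ}
    (σ : (Fin n → Fin b) → A) (c : A → ℕ) : 0 ≤ censusKernel M b n σ c :=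
  sum_nonneg fun τ _ => by split <;> simp [levelKernel_nonneg hM]

theorem sum_censusKernel {M : A → A → ℝ} (hM : ∀ a, ∑ j, M a j = 1) {n : ℕ}
    (σ : (Fin n → Fin b) → A) :
    ∑ c ∈ univ.image (census (b := b) (n := n + 1)), censusKernel M b n σ c = 1 := by
  simpa [censusKernel, sum_levelKernel hM] using
    sum_image_mul_sum_ite census (levelKernel M b n σ) 1

theorem censusDist_succ (M : A → A → ℝ) (i : A) (n : ℕ) (c : A → ℕ) :
    censusDist M b i (n + 1) c = ∑ σ, levelDist M b i n σ * censusKernel M b n σ c := by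
  simp_rw [censusDist, censusKernel, mul_sum, mul_ite, mul_zero]
  rw [sum_comm]
  simp_rw [levelDist_succ, sum_ite_irrel, sum_const_zero]

theorem censusDist_nonneg {M : A → A → ℝ} (hM : M ∈ Matrix.rowStochastic ℝ A) (i : A) (n : ℕ)
    (c : A → ℕ) : 0 ≤ censusDist M b i n c :=
  sum_nonneg fun σ _ => by split <;> simp [levelDist_nonneg hM]

theorem censusDist_eq_zero_of_notMem (M : A → A → ℝ) (i : A) {n : ℕ} {c : A → ℕ}
    (hc : c ∉ univ.image (census (b := b) (n := n))) : censusDist M b i n c = 0 :=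
  sum_eq_zero fun σ _ =>
    if_neg fun (hσ : census σ = c) => hc (hσ ▸ mem_image_of_mem census (mem_univ σ))

theorem censusTV_eq_sum_image (M : A → A → ℝ) (i j : A) (n : ℕ) :
    censusTV M b i j n = 1 / 2 * ∑ c ∈ univ.image (census (b := b) (n := n)),
      |censusDist M b i n c - censusDist M b j n c| := by
  rw [censusTV, tsum_eq_sum fun c hc => by
    rw [censusDist_eq_zero_of_notMem M i hc, censusDist_eq_zero_of_notMem M j hc, sub_zero,
      abs_zero]]

theorem censusTV_le_tvDist (M : A → A → ℝ) (i j : A) (n : ℕ) :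
    censusTV M b i j n ≤ tvDist (levelDist M b i n) (levelDist M b j n) := by
  rw [censusTV_eq_sum_image, tvDist]
  gcongr 1 / 2 * ?_
  exact sum_image_abs_sub_le census _ _

theorem censusTV_antitone {M : Bool → Bool → ℝ} (hM : M ∈ Matrix.rowStochastic ℝ Bool)
    (i j : Bool) : Antitone fun n => censusTV M b i j n := by
  refine antitone_nat_of_succ_le fun n => ?_
  simp only [censusTV_eq_sum_image]
  gcongr 1 / 2 * ?_
  have hstep : ∀ (k : Bool) (c' : Bool → ℕ), censusDist M b k (n + 1) c'
      = ∑ c ∈ univ.image census,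
          censusDist M b k n c * censusKernel M b n (Function.invFun census c) c' := fun k c' => by
    rw [censusDist_succ]
    exact sum_mul_eq_sum_image_mul_invFun census _ _ fun _ _ h =>
      censusKernel_eq_of_census_eq M h c'
  simp_rw [hstep, ← sum_sub_distrib, ← sub_mul]
  exact sum_abs_sum_mul_le _ _ _ (fun _ _ _ _ => censusKernel_nonneg hM _ _) fun _ _ =>
    (sum_censusKernel (Matrix.sum_row_of_mem_rowStochastic hM) _).le

end Census

theorem le_censusTV_bsc {ε : ℝ} {b : ℕ} (h0 : 0 ≤ ε) (h1 : ε ≤ 1)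
    (h : 1 < (b : ℝ) * (1 - 2 * ε) ^ 2) (n : ℕ) :
    ((b : ℝ) * (1 - 2 * ε) ^ 2 - 1) / ((b : ℝ) * (1 - 2 * ε) ^ 2 - (1 - 2 * ε) ^ 2)
      ≤ censusTV (bsc ε) b true false n := by
  have hM := bsc_mem_rowStochastic h0 h1
  have hθ : (1 - 2 * ε) ^ 2 ≤ 1 := by nlinarith
  let X : (Bool → ℕ) → ℝ := fun c => (c true : ℝ) - c false
  have hmoment (k : Bool) (F : ℝ → ℝ) :
      ∑ c ∈ univ.image (census (A := Bool) (b := b) (n := n)),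
          F (X c) * censusDist (bsc ε) b k n c
        = ∑ σ, levelDist (bsc ε) b k n σ * F (magnetization σ) := by
    simp only [magnetization_eq_census]
    exact sum_image_mul_sum_ite census _ fun c => F (X c)
  have hmean : ∑ c ∈ univ.image (census (A := Bool) (b := b) (n := n)),
      X c * (censusDist (bsc ε) b true n c - censusDist (bsc ε) b false n c)
        = 2 * (b * (1 - 2 * ε)) ^ n := by
    simp_rw [mul_sub, sum_sub_distrib]
    rw [hmoment true fun x => x, hmoment false fun x => x,
      sum_levelDist_bsc_mul_magnetization, sum_levelDist_bsc_mul_magnetization]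
    simp only [spin, ↓reduceIte, Bool.false_eq_true]; ring
  have hsecond : ((b : ℝ) * (1 - 2 * ε) ^ 2 - 1)
      * ∑ c ∈ univ.image (census (A := Bool) (b := b) (n := n)),
          X c ^ 2 * (censusDist (bsc ε) b true n c + censusDist (bsc ε) b false n c)
        ≤ 2 * (b * (1 - 2 * ε) ^ 2 - (1 - 2 * ε) ^ 2) * ((b * (1 - 2 * ε)) ^ n) ^ 2 := by
    simp_rw [mul_add, sum_add_distrib]
    rw [hmoment true (· ^ 2), hmoment false (· ^ 2), mul_add,
      sum_levelDist_bsc_mul_magnetization_sq, sum_levelDist_bsc_mul_magnetization_sq]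
    have : 0 ≤ (1 - (1 - 2 * ε) ^ 2) * (b : ℝ) ^ n := mul_nonneg (by linarith) (by positivity)
    rw [← pow_mul, mul_comm n 2, pow_mul, mul_pow (b : ℝ) (1 - 2 * ε) 2]
    linarith
  rw [censusTV_eq_sum_image]
  exact div_le_half_sum_abs_sub _ X (fun c _ => censusDist_nonneg hM true n c)
    (fun c _ => censusDist_nonneg hM false n c) (pow_ne_zero n fun h' => by nlinarith)
    (by linarith) hmean hsecond

theorem bsc_reconstruction_and_census_solvable (b : ℕ) (ε : ℝ)
    (hε0 : 0 < ε) (hε1 : ε < 1) (h : 1 < (b : ℝ) * (1 - 2 * ε) ^ 2) :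
    (∃ i j : Bool, ∃ L > 0, Tendsto
      (fun n => tvDist (levelDist (bsc ε) b i n) (levelDist (bsc ε) b j n))
      atTop (nhds L)) ∧
    (∃ i j : Bool, ∃ L > 0, Tendsto
      (fun n => censusTV (bsc ε) b i j n) atTop (nhds L)) := by
  have hM := bsc_mem_rowStochastic hε0.le hε1.le
  have hθ : (1 - 2 * ε) ^ 2 ≤ 1 := by nlinarith
  have hpos : 0 < ((b : ℝ) * (1 - 2 * ε) ^ 2 - 1)
      / ((b : ℝ) * (1 - 2 * ε) ^ 2 - (1 - 2 * ε) ^ 2) := div_pos (by linarith) (by linarith)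
  have hlow := le_censusTV_bsc hε0.le hε1.le h
  exact ⟨⟨true, false, exists_pos_tendsto_of_antitone (tvDist_levelDist_antitone hM true false)
      hpos fun n => (hlow n).trans (censusTV_le_tvDist _ _ _ n)⟩,
    ⟨true, false, exists_pos_tendsto_of_antitone (censusTV_antitone hM true false) hpos hlow⟩⟩
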